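/- Let u, v : ℤ → {0,1} with u ≠ v, and suppose that for all integers p ≤ q the number of indices i with p ≤ i ≤ q and u(i) = 0 differs from the number of indices i with p ≤ i ≤ q and v(i) = 0 by at most 1. Then there exists a unique w : ℤ → {0,1} such that for every integer i: if u(i) ≠ v(i) then w(i) = u(i) and w(i+1) = v(i), and if u(i) = v(i) then w(i) = w(i+1). -/

import Mathlib

/-!
Consecutive mismatches of `u` and `v` alternate between the two kinds of replacement: if
`i < j` are mismatches with none in between, the zero counts of `u` and `v` on `[i, j]` differ
by the contributions of `i` and `j` alone, which are `±1` and so must cancel, i.e. `v i = u j`.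
Hence the word reading `u` at the next mismatch (or `v` after the last one) is a coding.
It is unique because a coding is pinned down at any mismatch and the coding rule determines it
letter by letter in both directions.
-/

/-- Bi-infinite binary words are functions `ℤ → Bool`, where `false` stands for the
letter 0 and `true` for the letter 1.  `zeroCount u p q` is the number of indices
`i` with `p ≤ i ≤ q` and `u i = 0`, as an integer. -/
noncomputable def zeroCount (u : ℤ → Bool) (p q : ℤ) : ℤ :=
  ((Finset.Icc p q).filter (fun i => u i = false)).card

open Finset in
theorem zeroCount_sub_zeroCount (u v : ℤ → Bool) (p q : ℤ) :
    zeroCount u p q - zeroCount v p q =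
      ∑ k ∈ Icc p q, (((v k).toNat : ℤ) - (u k).toNat) := by
  rw [zeroCount, zeroCount, natCast_card_filter, natCast_card_filter, ← sum_sub_distrib]
  refine sum_congr rfl fun k _ => ?_
  cases u k <;> cases v k <;> rfl

theorem eq_of_consecutive_mismatches {u v : ℤ → Bool} {i j : ℤ}
    (hd : |zeroCount u i j - zeroCount v i j| ≤ 1) (hij : i < j)
    (hi : u i ≠ v i) (hj : u j ≠ v j) (hmid : ∀ k, i < k → k < j → u k = v k) :
    v i = u j := by
  have hsum : zeroCount u i j - zeroCount v i j =
      (((v i).toNat : ℤ) - (u i).toNat) + (((v j).toNat : ℤ) - (u j).toNat) := by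
    rw [zeroCount_sub_zeroCount]
    refine Finset.sum_eq_add_of_mem i j (by simp [hij.le]) (by simp [hij.le]) hij.ne ?_
    intro k hk hkij
    rw [Finset.mem_Icc] at hk
    rw [hmid k (by omega) (by omega), sub_self]
  rw [hsum] at hd
  revert hi hj hd
  cases u i <;> cases v i <;> cases u j <;> cases v j <;> decide

def IsReplacementCoding (u v w : ℤ → Bool) : Prop :=
  ∀ i : ℤ, (u i ≠ v i → w i = u i ∧ w (i + 1) = v i) ∧ (u i = v i → w i = w (i + 1))

theorem IsReplacementCoding.eq_of_ne {u v w w' : ℤ → Bool} (hw : IsReplacementCoding u v w)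
    (hw' : IsReplacementCoding u v w') {i₀ : ℤ} (hi₀ : u i₀ ≠ v i₀) : w = w' := by
  funext i
  induction i using Int.inductionOn' with
  | b => exact i₀
  | zero => rw [((hw i₀).1 hi₀).1, ((hw' i₀).1 hi₀).1]
  | succ k _ ih =>
    by_cases hk : u k = v k
    · rw [← (hw k).2 hk, ← (hw' k).2 hk, ih]
    · rw [((hw k).1 hk).2, ((hw' k).1 hk).2]
  | pred k _ ih =>
    have hk := sub_add_cancel k 1
    by_cases hk' : u (k - 1) = v (k - 1)
    · rw [(hw (k - 1)).2 hk', (hw' (k - 1)).2 hk', hk, ih]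
    · rw [((hw (k - 1)).1 hk').1, ((hw' (k - 1)).1 hk').1]

section Construction

variable (u v : ℤ → Bool)

def mismatchesFrom (i : ℤ) : Set ℤ := {j | i ≤ j ∧ u j ≠ v j}

variable {u v}

theorem mismatchesFrom_add_one {i : ℤ} (hi : u i = v i) :
    mismatchesFrom u v (i + 1) = mismatchesFrom u v i := by
  ext j
  simp only [mismatchesFrom, Set.mem_ofPred_eq]
  constructor
  · rintro ⟨hij, hj⟩
    exact ⟨by omega, hj⟩
  · rintro ⟨hij, hj⟩
    rcases hij.eq_or_lt with rfl | hlt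
    · exact absurd hi hj
    · exact ⟨hlt, hj⟩

theorem sInf_mismatchesFrom {i : ℤ} (hi : u i ≠ v i) : sInf (mismatchesFrom u v i) = i :=
  IsLeast.csInf_eq ⟨⟨le_rfl, hi⟩, fun _ hj => hj.1⟩

variable (u v)

/-- The `sSup` branch is only taken past the last mismatch, so its junk value on sets unbounded
above never matters. -/
noncomputable def codingWord (i : ℤ) : Bool :=
  open Classical in
  if (mismatchesFrom u v i).Nonempty then u (sInf (mismatchesFrom u v i))
  else v (sSup {j | u j ≠ v j})

variable {u v}

theorem codingWord_of_ne {i : ℤ} (hi : u i ≠ v i) : codingWord u v i = u i := by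
  rw [codingWord, if_pos ⟨i, le_rfl, hi⟩, sInf_mismatchesFrom hi]

theorem codingWord_add_one_of_eq {i : ℤ} (hi : u i = v i) :
    codingWord u v (i + 1) = codingWord u v i := by
  rw [codingWord, codingWord, mismatchesFrom_add_one hi]

theorem codingWord_add_one_of_ne
    (hd : ∀ p q : ℤ, p ≤ q → |zeroCount u p q - zeroCount v p q| ≤ 1)
    {i : ℤ} (hi : u i ≠ v i) : codingWord u v (i + 1) = v i := by
  rw [codingWord]
  split_ifs with hne
  · have hbdd : BddBelow (mismatchesFrom u v (i + 1)) := ⟨i + 1, fun _ hj => hj.1⟩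
    obtain ⟨hij, hj⟩ := Int.csInf_mem hne hbdd
    refine (eq_of_consecutive_mismatches (hd _ _ (by omega)) (by omega) hi hj ?_).symm
    intro k hik hkj
    by_contra hk
    exact (csInf_le hbdd ⟨by omega, hk⟩).not_gt hkj
  · have hlast : IsGreatest {j | u j ≠ v j} i :=
      ⟨hi, fun j hj => not_lt.mp fun hij => hne ⟨j, by omega, hj⟩⟩
    rw [hlast.csSup_eq]

theorem isReplacementCoding_codingWord
    (hd : ∀ p q : ℤ, p ≤ q → |zeroCount u p q - zeroCount v p q| ≤ 1) :
    IsReplacementCoding u v (codingWord u v) := fun _ =>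
  ⟨fun hi => ⟨codingWord_of_ne hi, codingWord_add_one_of_ne hd hi⟩,
    fun hi => (codingWord_add_one_of_eq hi).symm⟩

end Construction

/-- If `u ≠ v` are bi-infinite binary words at distance at most one, then there is a
unique word `w` coding the sequence of replacements transforming `u` into `v`:
reading `(w i, w (i+1)) = (u i, v i)` at a position `i` where `u i ≠ v i` means a
replacement `u i → v i` occurs there, and `w i = w (i+1)` where `u i = v i`. -/
theorem existsUnique_replacement_coding (u v : ℤ → Bool) (hne : u ≠ v)
    (hd : ∀ p q : ℤ, p ≤ q → |zeroCount u p q - zeroCount v p q| ≤ 1) :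
    ∃! w : ℤ → Bool, ∀ i : ℤ,
      (u i ≠ v i → w i = u i ∧ w (i + 1) = v i) ∧
      (u i = v i → w i = w (i + 1)) := by
  obtain ⟨i₀, hi₀⟩ := Function.ne_iff.mp hne
  have hcoding := isReplacementCoding_codingWord hd
  exact ⟨codingWord u v, hcoding, fun w hw => IsReplacementCoding.eq_of_ne hw hcoding hi₀⟩
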